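/- arXiv:math/0604235 — 2 statements merged into one kernel-verified Lean document; each statement's English description precedes it below -/
import Mathlib

section
/- Let R be a commutative noetherian normal domain and let x_1, x_2, x_3 be nonzero elements such that ht(x_i, x_j) = 2 for i ≠ j, ht(x_1, x_2, x_3) = 3, and for all positive integers n_1, n_2, n_3 the colon conditions ((x_1^{n_1}, x_2^{n_2}) : x_3) = ((x_1^{n_1}, x_2^{n_2}) : x_3^2), ((x_2^{n_2}, x_3^{n_3}) : x_1) = ((x_2^{n_2}, x_3^{n_3}) : x_1^2), and ((x_1^{n_1}, x_3^{n_3}) : x_2) = ((x_1^{n_1}, x_3^{n_3}) : x_2^2) hold. Let T_3 be the (finite) set of all associated prime ideals of the modules R/(x_1^{i_1}, x_2^{i_2}, x_3^{i_3}) taken over all positive integers i_1, i_2, i_3 with i_1 + i_2 + i_3 ≤ 6. Then for all positive integers n_1, n_2, n_3, every associated prime ideal of R/(x_1^{n_1}, x_2^{n_2}, x_3^{n_3}) lies in T_3. -/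
/-- The height of an ideal: the infimum of the heights of the primes containing it. -/
noncomputable def idealHeight (R : Type) [CommRing R] (I : Ideal R) : ℕ∞ :=
  ⨅ (P : PrimeSpectrum R) (_ : I ≤ P.asIdeal), Order.height P

/-!
Multiplication by `x` gives an exact sequence `0 → R/(I : x) → R/I → R/(I + (x)) → 0`, hence
`Ass(R/(I : x)) ⊆ Ass(R/I) ⊆ Ass(R/(I : x)) ∪ Ass(R/(I + (x)))`. Since
`(J + (x^(n+1))) : x = (J : x) + (xⁿ)`, and `J : x` is `x`-saturated as soon as
`J : x = J : x²`, induction on `n` shows that every associated prime of `R/(J + (xⁿ))` is one of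
`R/(J + (x))` or of `R/(J + (x²))`. Applying this to each of the three generators in turn brings
every exponent down to at most `2`.
-/

namespace Ideal
variable {R : Type*} [CommRing R]

def mulColonQuot (I : Ideal R) (x : R) : R ⧸ I.colon (span {x}) →ₗ[R] R ⧸ I :=
  Submodule.mapQ _ _ (LinearMap.mul R R x) fun r hr ↦ by
    simpa [mul_comm] using mem_colon_span_singleton.mp hr

theorem mulColonQuot_mk (I : Ideal R) (x r : R) :
    I.mulColonQuot x (Quotient.mk _ r) = Quotient.mk I (x * r) := rfl

theorem mulColonQuot_injective (I : Ideal R) (x : R) : Function.Injective (I.mulColonQuot x) := by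
  refine (injective_iff_map_eq_zero _).2 fun y hy ↦ ?_
  obtain ⟨r, rfl⟩ := Quotient.mk_surjective y
  rw [mulColonQuot_mk, Quotient.eq_zero_iff_mem] at hy
  rwa [Quotient.eq_zero_iff_mem, mem_colon_span_singleton, mul_comm]

theorem exact_mulColonQuot_factor (I : Ideal R) (x : R) :
    Function.Exact (I.mulColonQuot x) (Submodule.factor (le_sup_left : I ≤ I ⊔ span {x})) := by
  intro y
  obtain ⟨r, rfl⟩ := Quotient.mk_surjective y
  change Quotient.mk _ r = 0 ↔ _
  simp only [Quotient.eq_zero_iff_mem, Submodule.mem_sup, mem_span_singleton', Set.mem_range]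
  constructor
  · rintro ⟨i, hi, _, ⟨s, rfl⟩, rfl⟩
    refine ⟨Quotient.mk _ s, ?_⟩
    rw [mulColonQuot_mk, Quotient.eq, mul_comm]
    simpa using hi
  · rintro ⟨z, hz⟩
    obtain ⟨s, rfl⟩ := Quotient.mk_surjective z
    rw [mulColonQuot_mk, Quotient.eq] at hz
    exact ⟨r - x * s, sub_mem_comm_iff.mp hz, s * x, ⟨s, rfl⟩, by ring⟩

theorem associatedPrimes_colon_subset (I : Ideal R) (x : R) :
    associatedPrimes R (R ⧸ I.colon (span {x})) ⊆ associatedPrimes R (R ⧸ I) :=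
  associatedPrimes.subset_of_injective (I.mulColonQuot_injective x)

theorem associatedPrimes_subset_colon_union_sup (I : Ideal R) (x : R) :
    associatedPrimes R (R ⧸ I) ⊆
      associatedPrimes R (R ⧸ I.colon (span {x})) ∪ associatedPrimes R (R ⧸ (I ⊔ span {x})) :=
  associatedPrimes.subset_union_of_exact (I.mulColonQuot_injective x)
    (I.exact_mulColonQuot_factor x)

theorem colon_colon_span_singleton (I : Ideal R) (x y : R) :
    (I.colon (span {x})).colon (span {y}) = I.colon (span {x * y}) := by
  ext r
  simp only [mem_colon_span_singleton, mul_comm x, mul_assoc]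

theorem sup_span_pow_sup_span_self (J : Ideal R) (x : R) {n : ℕ} (hn : n ≠ 0) :
    J ⊔ span {x ^ n} ⊔ span {x} = J ⊔ span {x} := by
  rw [sup_assoc, sup_eq_right.mpr (span_singleton_le_span_singleton.mpr (dvd_pow_self x hn))]

theorem sup_span_pow_succ_colon (J : Ideal R) (x : R) (n : ℕ) :
    (J ⊔ span {x ^ (n + 1)}).colon (span {x}) = J.colon (span {x}) ⊔ span {x ^ n} := by
  ext r
  simp only [mem_colon_span_singleton, Submodule.mem_sup, mem_span_singleton']
  constructor
  · rintro ⟨i, hi, _, ⟨s, rfl⟩, hr⟩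
    refine ⟨r - s * x ^ n, ?_, s * x ^ n, ⟨s, rfl⟩, by ring⟩
    convert hi using 1
    linear_combination hr.symm
  · rintro ⟨i, hi, _, ⟨s, rfl⟩, rfl⟩
    exact ⟨i * x, hi, s * x ^ (n + 1), ⟨s, rfl⟩, by ring⟩

theorem associatedPrimes_sup_span_pow_subset {K : Ideal R} {x : R}
    (hK : K.colon (span {x}) = K) (n : ℕ) :
    associatedPrimes R (R ⧸ (K ⊔ span {x ^ (n + 1)})) ⊆
      associatedPrimes R (R ⧸ (K ⊔ span {x})) := by
  induction n with
  | zero => rw [zero_add, pow_one]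
  | succ n ih =>
    refine (associatedPrimes_subset_colon_union_sup _ x).trans (Set.union_subset ?_ ?_)
    · rwa [sup_span_pow_succ_colon, hK]
    · rw [sup_span_pow_sup_span_self _ _ (n + 1).succ_ne_zero]

theorem exists_le_two_mem_associatedPrimes_sup_span_pow {J : Ideal R} {x : R}
    (hJ : J.colon (span {x}) = J.colon (span {x ^ 2})) {n : ℕ} (hn : 0 < n) {P : Ideal R}
    (hP : P ∈ associatedPrimes R (R ⧸ (J ⊔ span {x ^ n}))) :
    ∃ k, 0 < k ∧ k ≤ 2 ∧ P ∈ associatedPrimes R (R ⧸ (J ⊔ span {x ^ k})) := by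
  by_cases hn2 : n ≤ 2
  · exact ⟨n, hn, hn2, hP⟩
  obtain ⟨m, rfl⟩ : ∃ m, n = m + 1 + 1 := ⟨n - 2, by omega⟩
  have hJx : (J.colon (span {x})).colon (span {x}) = J.colon (span {x}) := by
    rw [colon_colon_span_singleton, ← sq, hJ]
  rcases associatedPrimes_subset_colon_union_sup _ x hP with hP | hP
  · rw [sup_span_pow_succ_colon] at hP
    refine ⟨2, two_pos, le_rfl, associatedPrimes_colon_subset _ x ?_⟩
    rw [sup_span_pow_succ_colon, pow_one]
    exact associatedPrimes_sup_span_pow_subset hJx m hP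
  · rw [sup_span_pow_sup_span_self _ _ (m + 1).succ_ne_zero] at hP
    exact ⟨1, one_pos, one_le_two, by rwa [pow_one]⟩

theorem exists_le_two_mem_associatedPrimes_span_triple_pow {a b x : R}
    (h : (span {a, b}).colon (span {x}) = (span {a, b}).colon (span {x ^ 2})) {n : ℕ} (hn : 0 < n)
    {P : Ideal R} (hP : P ∈ associatedPrimes R (R ⧸ span {a, b, x ^ n})) :
    ∃ k, 0 < k ∧ k ≤ 2 ∧ P ∈ associatedPrimes R (R ⧸ span {a, b, x ^ k}) := by
  have hsplit (c : R) : span {a, b, c} = span {a, b} ⊔ span {c} := by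
    simp only [span_insert, sup_assoc]
  rw [hsplit] at hP
  obtain ⟨k, hk, hk2, hPk⟩ := exists_le_two_mem_associatedPrimes_sup_span_pow h hn hP
  exact ⟨k, hk, hk2, by rwa [hsplit]⟩

end Ideal

theorem stmt_16_general (R : Type) [CommRing R]
    (x₁ x₂ x₃ : R)
    (hc3 : ∀ n₁ n₂ : ℕ, 0 < n₁ → 0 < n₂ →
      (Ideal.span {x₁ ^ n₁, x₂ ^ n₂}).colon (Ideal.span {x₃}) =
        (Ideal.span {x₁ ^ n₁, x₂ ^ n₂}).colon (Ideal.span {x₃ ^ 2}))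
    (hc1 : ∀ n₂ n₃ : ℕ, 0 < n₂ → 0 < n₃ →
      (Ideal.span {x₂ ^ n₂, x₃ ^ n₃}).colon (Ideal.span {x₁}) =
        (Ideal.span {x₂ ^ n₂, x₃ ^ n₃}).colon (Ideal.span {x₁ ^ 2}))
    (hc2 : ∀ n₁ n₃ : ℕ, 0 < n₁ → 0 < n₃ →
      (Ideal.span {x₁ ^ n₁, x₃ ^ n₃}).colon (Ideal.span {x₂}) =
        (Ideal.span {x₁ ^ n₁, x₃ ^ n₃}).colon (Ideal.span {x₂ ^ 2})) :
    ∀ n₁ n₂ n₃ : ℕ, 0 < n₁ → 0 < n₂ → 0 < n₃ →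
      ∀ P ∈ associatedPrimes R (R ⧸ Ideal.span {x₁ ^ n₁, x₂ ^ n₂, x₃ ^ n₃}),
        ∃ i₁ i₂ i₃ : ℕ, 0 < i₁ ∧ 0 < i₂ ∧ 0 < i₃ ∧ i₁ + i₂ + i₃ ≤ 6 ∧
          P ∈ associatedPrimes R (R ⧸ Ideal.span {x₁ ^ i₁, x₂ ^ i₂, x₃ ^ i₃}) := by
  intro n₁ n₂ n₃ hn₁ hn₂ hn₃ P hP
  obtain ⟨i₃, hi₃, hi₃2, hP⟩ :=
    Ideal.exists_le_two_mem_associatedPrimes_span_triple_pow (hc3 n₁ n₂ hn₁ hn₂) hn₃ hP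
  rw [Set.insert_comm, Set.pair_comm] at hP
  obtain ⟨i₁, hi₁, hi₁2, hP⟩ :=
    Ideal.exists_le_two_mem_associatedPrimes_span_triple_pow (hc1 n₂ i₃ hn₂ hi₃) hn₁ hP
  rw [Set.pair_comm, Set.insert_comm, Set.pair_comm] at hP
  obtain ⟨i₂, hi₂, hi₂2, hP⟩ :=
    Ideal.exists_le_two_mem_associatedPrimes_span_triple_pow (hc2 i₁ i₃ hi₁ hi₃) hn₂ hP
  refine ⟨i₁, i₂, i₃, hi₁, hi₂, hi₃, by omega, ?_⟩
  rwa [Set.pair_comm]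

/-- Claim 3.  Let `R` be a noetherian normal domain and `x₁, x₂, x₃` nonzero
with `ht (xᵢ, xⱼ) = 2` for `i ≠ j`, `ht (x₁, x₂, x₃) = 3`, satisfying the colon conditions
`((xᵢ^{nᵢ}, xⱼ^{nⱼ}) : x_k) = ((xᵢ^{nᵢ}, xⱼ^{nⱼ}) : x_k²)`.  Then every associated prime
of `R/(x₁^{n₁}, x₂^{n₂}, x₃^{n₃})` is an associated prime of some
`R/(x₁^{i₁}, x₂^{i₂}, x₃^{i₃})` with `i₁ + i₂ + i₃ ≤ 6`. -/
theorem stmt_16 (R : Type) [CommRing R] [IsNoetherianRing R] [IsDomain R]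
    [IsIntegrallyClosed R]
    (x₁ x₂ x₃ : R) (h1 : x₁ ≠ 0) (h2 : x₂ ≠ 0) (h3 : x₃ ≠ 0)
    (hht12 : idealHeight R (Ideal.span {x₁, x₂}) = 2)
    (hht13 : idealHeight R (Ideal.span {x₁, x₃}) = 2)
    (hht23 : idealHeight R (Ideal.span {x₂, x₃}) = 2)
    (hht123 : idealHeight R (Ideal.span {x₁, x₂, x₃}) = 3)
    (hc3 : ∀ n₁ n₂ : ℕ, 0 < n₁ → 0 < n₂ →
      (Ideal.span {x₁ ^ n₁, x₂ ^ n₂}).colon (Ideal.span {x₃}) =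
        (Ideal.span {x₁ ^ n₁, x₂ ^ n₂}).colon (Ideal.span {x₃ ^ 2}))
    (hc1 : ∀ n₂ n₃ : ℕ, 0 < n₂ → 0 < n₃ →
      (Ideal.span {x₂ ^ n₂, x₃ ^ n₃}).colon (Ideal.span {x₁}) =
        (Ideal.span {x₂ ^ n₂, x₃ ^ n₃}).colon (Ideal.span {x₁ ^ 2}))
    (hc2 : ∀ n₁ n₃ : ℕ, 0 < n₁ → 0 < n₃ →
      (Ideal.span {x₁ ^ n₁, x₃ ^ n₃}).colon (Ideal.span {x₂}) =
        (Ideal.span {x₁ ^ n₁, x₃ ^ n₃}).colon (Ideal.span {x₂ ^ 2})) :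
    ∀ n₁ n₂ n₃ : ℕ, 0 < n₁ → 0 < n₂ → 0 < n₃ →
      ∀ P ∈ associatedPrimes R (R ⧸ Ideal.span {x₁ ^ n₁, x₂ ^ n₂, x₃ ^ n₃}),
        ∃ i₁ i₂ i₃ : ℕ, 0 < i₁ ∧ 0 < i₂ ∧ 0 < i₃ ∧ i₁ + i₂ + i₃ ≤ 6 ∧
          P ∈ associatedPrimes R (R ⧸ Ideal.span {x₁ ^ i₁, x₂ ^ i₂, x₃ ^ i₃}) :=
  stmt_16_general R x₁ x₂ x₃ hc3 hc1 hc2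
end

section
/- Let R be a commutative noetherian normal domain and let x_1, x_2, x_3, x_4 be elements of R such that for all positive integers n_1, n_2, n_3, n_4: (a) ((x_1^{n_1}, x_2^{n_2}) : x_3) = ((x_1^{n_1}, x_2^{n_2}) : x_3^2), ((x_2^{n_2}, x_3^{n_3}) : x_1) = ((x_2^{n_2}, x_3^{n_3}) : x_1^2), and ((x_1^{n_1}, x_3^{n_3}) : x_2) = ((x_1^{n_1}, x_3^{n_3}) : x_2^2); and (b) ((x_1^{n_1}, x_2^{n_2}, x_3^{n_3}) : x_4^{n_4}) ⊆ ((x_1^{n_1}, x_2^{n_2}, x_3^{n_3}) : x_j) for each j with 1 ≤ j ≤ 3. Then for every permutation (i_1, i_2, i_3) of (1, 2, 3) and all positive integers n_1, n_2, n_4, one has ((x_{i_1}^{n_1}, x_{i_2}^{n_2}, x_4^{n_4}) : x_{i_3}^2) = ((x_{i_1}^{n_1}, x_{i_2}^{n_2}, x_4^{n_4}) : x_{i_3}^3). -/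
section Aux

variable {R : Type} [CommRing R]

private lemma mem_span_three {u v w z : R} :
    z ∈ Ideal.span {u, v, w} ↔ ∃ a b c, z = a * u + b * v + c * w := by
  constructor
  · intro hz
    rw [Ideal.mem_span_insert] at hz
    obtain ⟨a, t, ht, rfl⟩ := hz
    rw [Ideal.mem_span_pair] at ht
    obtain ⟨b, c, rfl⟩ := ht
    exact ⟨a, b, c, by ring⟩
  · rintro ⟨a, b, c, rfl⟩
    refine Ideal.add_mem _ (Ideal.add_mem _ ?_ ?_) ?_ <;>
      exact Ideal.mul_mem_left _ _ (Ideal.subset_span (by simp))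

omit [CommRing R] in
private lemma range_fin3 {f : Fin 3 → R} : Set.range f = {f 0, f 1, f 2} := by
  ext y
  constructor
  · rintro ⟨i, rfl⟩; fin_cases i <;> simp
  · rintro (rfl | rfl | rfl) <;> exact ⟨_, rfl⟩

omit [CommRing R] in
private lemma perm_triple (σ : Equiv.Perm (Fin 3)) (f : Fin 3 → R) :
    ({f 0, f 1, f 2} : Set R) = {f (σ 0), f (σ 1), f (σ 2)} := by
  have h1 : ({f (σ 0), f (σ 1), f (σ 2)} : Set R) = Set.range (f ∘ σ) :=
    (range_fin3 (f := f ∘ σ)).symm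
  have h2 : Set.range (f ∘ σ) = Set.range f := σ.surjective.range_comp f
  rw [h1, h2, range_fin3]

end Aux

/-- Claim 4.  Let `R` be a noetherian normal domain and `x₁, x₂, x₃, x₄ ∈ R`
satisfying, for all positive exponents, (a) the colon conditions
`((x_{i₁}^{a}, x_{i₂}^{b}) : x_{i₃}) = ((x_{i₁}^{a}, x_{i₂}^{b}) : x_{i₃}²)` for every
permutation `(i₁, i₂, i₃)` of `(1, 2, 3)`, and (b)
`((x₁^{n₁}, x₂^{n₂}, x₃^{n₃}) : x₄^{n₄}) ⊆ ((x₁^{n₁}, x₂^{n₂}, x₃^{n₃}) : x_j)` for each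
`1 ≤ j ≤ 3`.  Then for every permutation `(i₁, i₂, i₃)` of `(1, 2, 3)` and all positive
`n₁, n₂, n₄`, one has `((x_{i₁}^{n₁}, x_{i₂}^{n₂}, x₄^{n₄}) : x_{i₃}²) =
((x_{i₁}^{n₁}, x_{i₂}^{n₂}, x₄^{n₄}) : x_{i₃}³)`. -/
theorem stmt_17 (R : Type) [CommRing R] [IsNoetherianRing R] [IsDomain R]
    [IsIntegrallyClosed R]
    (x : Fin 3 → R) (x₄ : R)
    (ha : ∀ σ : Equiv.Perm (Fin 3), ∀ a b : ℕ, 0 < a → 0 < b →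
      (Ideal.span {x (σ 0) ^ a, x (σ 1) ^ b}).colon (Ideal.span {x (σ 2)}) =
        (Ideal.span {x (σ 0) ^ a, x (σ 1) ^ b}).colon (Ideal.span {x (σ 2) ^ 2}))
    (hb : ∀ n : Fin 3 → ℕ, (∀ i, 0 < n i) → ∀ n₄ : ℕ, 0 < n₄ → ∀ j : Fin 3,
      (Ideal.span {x 0 ^ n 0, x 1 ^ n 1, x 2 ^ n 2}).colon (Ideal.span {x₄ ^ n₄}) ≤
        (Ideal.span {x 0 ^ n 0, x 1 ^ n 1, x 2 ^ n 2}).colon (Ideal.span {x j})) :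
    ∀ σ : Equiv.Perm (Fin 3), ∀ n₁ n₂ n₄ : ℕ, 0 < n₁ → 0 < n₂ → 0 < n₄ →
      (Ideal.span {x (σ 0) ^ n₁, x (σ 1) ^ n₂, x₄ ^ n₄}).colon
          (Ideal.span {x (σ 2) ^ 2}) =
        (Ideal.span {x (σ 0) ^ n₁, x (σ 1) ^ n₂, x₄ ^ n₄}).colon
          (Ideal.span {x (σ 2) ^ 3}) := by
  intro σ n₁ n₂ n₄ hn₁ hn₂ hn₄
  set u := x (σ 0) ^ n₁ with hu
  set v := x (σ 1) ^ n₂ with hv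
  set w := x₄ ^ n₄ with hw
  set y := x (σ 2) with hy
  set J : Ideal R := Ideal.span {u, v} with hJ
  set I : Ideal R := Ideal.span {u, v, w} with hI
  -- basic memberships
  have huI : u ∈ I := Ideal.subset_span (by simp)
  have hvI : v ∈ I := Ideal.subset_span (by simp)
  have hwI : w ∈ I := Ideal.subset_span (by simp)
  have hJI : J ≤ I := Ideal.span_mono (by intro t ht; simp at ht; rcases ht with rfl | rfl <;> simp)
  -- from (a): (J : y^3) ≤ (J : y)
  have hcol : ∀ z : R, z * y ^ 3 ∈ J → z * y ∈ J := by
    intro z hz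
    have h1 := ha σ n₁ n₂ hn₁ hn₂
    have key : ∀ t : R, t * y ^ 2 ∈ J → t * y ∈ J := by
      intro t ht
      have : t ∈ J.colon (Ideal.span {y ^ 2}) := Ideal.mem_colon_span_singleton.mpr ht
      rw [← h1] at this
      exact Ideal.mem_colon_span_singleton.mp this
    have h2 : (z * y) * y ^ 2 ∈ J := by
      have : z * y ^ 3 = (z * y) * y ^ 2 := by ring
      rwa [this] at hz
    have h3 : (z * y) * y ∈ J := key _ h2
    have h4 : z * y ^ 2 ∈ J := by
      have : z * y ^ 2 = (z * y) * y := by ring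
      rwa [this]
    exact key _ h4
  ext z
  simp only [Ideal.mem_colon_span_singleton]
  constructor
  · intro hz
    have : z * y ^ 3 = (z * y ^ 2) * y := by ring
    rw [this]
    exact Ideal.mul_mem_right _ _ hz
  · intro hz
    -- write z * y^3 = a*u + b*v + c*w
    rw [hI, mem_span_three] at hz
    obtain ⟨a, b, c, habc⟩ := hz
    -- the ideal (u, v, y^3)
    set K : Ideal R := Ideal.span {u, v, y ^ 3} with hK
    have huK : u ∈ K := Ideal.subset_span (by simp)
    have hvK : v ∈ K := Ideal.subset_span (by simp)
    have hyK : y ^ 3 ∈ K := Ideal.subset_span (by simp)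
    -- c * w ∈ K
    have hcw : c * w ∈ K := by
      have : c * w = z * y ^ 3 - a * u - b * v := by rw [habc]; ring
      rw [this]
      exact Ideal.sub_mem _ (Ideal.sub_mem _ (Ideal.mul_mem_left _ _ hyK)
        (Ideal.mul_mem_left _ _ huK)) (Ideal.mul_mem_left _ _ hvK)
    -- identify K with the span in the statement of (b)
    set m : Fin 3 → ℕ := fun i => if i = σ 0 then n₁ else if i = σ 1 then n₂ else 3 with hm
    have hm0 : m (σ 0) = n₁ := by simp [hm]
    have hm1 : m (σ 1) = n₂ := by
      have : σ 1 ≠ σ 0 := fun h => by simpa using σ.injective h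
      simp [hm, this]
    have hm2 : m (σ 2) = 3 := by
      have h20 : σ 2 ≠ σ 0 := fun h => by simpa using σ.injective h
      have h21 : σ 2 ≠ σ 1 := fun h => by simpa using σ.injective h
      simp [hm, h20, h21]
    have hmpos : ∀ i, 0 < m i := by
      intro i
      rcases σ.surjective i with ⟨j, rfl⟩
      fin_cases j
      · simpa [hm0] using hn₁
      · simpa [hm1] using hn₂
      · simp [hm2]
    have hKeq : Ideal.span {x 0 ^ m 0, x 1 ^ m 1, x 2 ^ m 2} = K := by
      rw [hK]
      congr 1
      have := perm_triple σ (fun i => x i ^ m i)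
      rw [this, hm0, hm1, hm2, ← hu, ← hv, ← hy]
    -- apply (b) with j = σ 2
    have hc : c ∈ K.colon (Ideal.span {y}) := by
      rw [← hKeq]
      refine hb m hmpos n₄ hn₄ (σ 2) ?_
      rw [hKeq]
      exact Ideal.mem_colon_span_singleton.mpr hcw
    have hcy : c * y ∈ K := Ideal.mem_colon_span_singleton.mp hc
    rw [hK, mem_span_three] at hcy
    obtain ⟨a', b', d, hcy⟩ := hcy
    -- (z*y - d*w) * y^3 ∈ J
    have hzy : (z * y - d * w) * y ^ 3 ∈ J := by
      have : (z * y - d * w) * y ^ 3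
          = (a * y + a' * w) * u + (b * y + b' * w) * v := by
        linear_combination y * habc + w * hcy
      rw [this]
      exact Ideal.add_mem _
        (Ideal.mul_mem_left _ _ (Ideal.subset_span (by simp)))
        (Ideal.mul_mem_left _ _ (Ideal.subset_span (by simp)))
    have hzy2 : (z * y - d * w) * y ∈ J := hcol _ hzy
    have : z * y ^ 2 = (z * y - d * w) * y + d * (w * y) := by ring
    rw [this]
    exact Ideal.add_mem _ (hJI hzy2) (Ideal.mul_mem_left _ _ (Ideal.mul_mem_right _ _ hwI))
end
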